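/- arXiv:1406.1256 — 5 statements merged into one kernel-verified Lean document; each statement's English description precedes it below -/
import Mathlib

section
/- Let f : ℝⁿ × ℝ → ℝⁿ be continuously differentiable in its first argument with Jacobian J(x,t) = ∂f/∂x(x,t), let M be a symmetric positive definite n×n real matrix and λ > 0. Suppose that for all x ∈ ℝⁿ and t ≥ 0 one has J(x,t)ᵀM + M·J(x,t) ⪯ -2λM. Then for any two solutions x₁, x₂ of ẋ = f(x,t) defined on [0,∞), one has (x₁(t)-x₂(t))ᵀM(x₁(t)-x₂(t)) ≤ e^{-2λt}·(x₁(0)-x₂(0))ᵀM(x₁(0)-x₂(0)) for all t ≥ 0; in particular all solutions converge to each other exponentially (contraction with respect to the constant metric M). -/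
/-!
Let `e = x₁ - x₂` and `V(t) = e ⬝ M e`. Then `V' = δ ⬝ M e + e ⬝ M δ` with
`δ = f(x₁,t) - f(x₂,t)`. The mean value theorem, applied on `[0,1]` to
`s ↦ f(x₂ + s e, t) ⬝ M e + e ⬝ M f(x₂ + s e, t)`, expresses this as
`J e ⬝ M e + e ⬝ M J e` with `J` the Jacobian at an intermediate point, so the LMI gives
`V' ≤ -2λ V`, and Grönwall's inequality gives `V(t) ≤ e^{-2λt} V(0)`.
-/

open Matrix Set

section

variable {ι κ : Type*} [Fintype ι]

theorem HasDerivAt.dotProduct {u v : ℝ → ι → ℝ} {u' v' : ι → ℝ} {t : ℝ}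
    (hu : HasDerivAt u u' t) (hv : HasDerivAt v v' t) :
    HasDerivAt (fun t => u t ⬝ᵥ v t) (u' ⬝ᵥ v t + u t ⬝ᵥ v') t := by
  simp only [_root_.dotProduct]
  rw [← Finset.sum_add_distrib]
  exact HasDerivAt.fun_sum fun i _ => (hasDerivAt_pi.mp hu i).fun_mul (hasDerivAt_pi.mp hv i)

theorem HasDerivAt.mulVec (M : Matrix κ ι ℝ) {v : ℝ → ι → ℝ} {v' : ι → ℝ} {t : ℝ}
    (hv : HasDerivAt v v' t) : HasDerivAt (fun t => M *ᵥ v t) (M *ᵥ v') t :=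
  hasDerivAt_pi.2 fun i => by
    simpa [Matrix.mulVec] using (hasDerivAt_const t (M i)).dotProduct hv

theorem HasDerivAt.dotProduct_mulVec (M : Matrix ι ι ℝ) {u v : ℝ → ι → ℝ} {u' v' : ι → ℝ}
    {t : ℝ} (hu : HasDerivAt u u' t) (hv : HasDerivAt v v' t) :
    HasDerivAt (fun t => u t ⬝ᵥ M *ᵥ v t) (u' ⬝ᵥ M *ᵥ v t + u t ⬝ᵥ M *ᵥ v') t :=
  hu.dotProduct (hv.mulVec M)

theorem le_mul_exp_of_hasDerivAt_le_mul {f f' : ℝ → ℝ} {K a : ℝ}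
    (hf : ∀ x ∈ Ici a, HasDerivAt f (f' x) x) (bound : ∀ x ∈ Ici a, f' x ≤ K * f x) :
    ∀ x ∈ Ici a, f x ≤ f a * Real.exp (K * (x - a)) := by
  intro x hx
  have h := le_gronwallBound_of_liminf_deriv_right_le (b := x) (ε := 0)
    (fun y hy => (hf y hy.1).continuousAt.continuousWithinAt)
    (fun y hy _ hr => (hf y hy.1).hasDerivWithinAt.liminf_right_slope_le hr) le_rfl
    (fun y hy => by simpa using bound y hy.1) x ⟨hx, le_rfl⟩
  rwa [gronwallBound_ε0] at h

theorem Matrix.PosSemidef.mulVec_dotProduct_add_le {A M : Matrix ι ι ℝ} {c : ℝ}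
    (h : (c • M - (Aᵀ * M + M * A)).PosSemidef) (w : ι → ℝ) :
    A *ᵥ w ⬝ᵥ M *ᵥ w + w ⬝ᵥ M *ᵥ (A *ᵥ w) ≤ c * (w ⬝ᵥ M *ᵥ w) := by
  have h0 := h.dotProduct_mulVec_nonneg w
  simp only [star_trivial, sub_mulVec, add_mulVec, smul_mulVec, ← mulVec_mulVec,
    dotProduct_sub, dotProduct_add, dotProduct_smul, smul_eq_mul, dotProduct_mulVec w Aᵀ,
    vecMul_transpose] at h0
  linarith

theorem dotProduct_mulVec_sub_add_le_of_jacobian [DecidableEq ι] {f : (ι → ℝ) → ι → ℝ}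
    {J : (ι → ℝ) → Matrix ι ι ℝ} {M : Matrix ι ι ℝ} {c : ℝ}
    (hf : ∀ x, HasFDerivAt f (Matrix.toLin' (J x)).toContinuousLinearMap x)
    (hJ : ∀ x, (c • M - ((J x)ᵀ * M + M * J x)).PosSemidef) (x y : ι → ℝ) :
    (f x - f y) ⬝ᵥ M *ᵥ (x - y) + (x - y) ⬝ᵥ M *ᵥ (f x - f y) ≤
      c * ((x - y) ⬝ᵥ M *ᵥ (x - y)) := by
  set w := x - y
  let γ : ℝ → ι → ℝ := fun s => y + s • w
  have hγ : ∀ s, HasDerivAt (fun s => f (γ s)) (J (γ s) *ᵥ w) s := fun s => by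
    have hline : HasDerivAt γ w s :=
      (((hasDerivAt_id s).smul_const w).const_add y).congr_deriv (one_smul ℝ w)
    have hcomp := (hf (γ s)).comp_hasDerivAt s hline
    rwa [LinearMap.coe_toContinuousLinearMap', toLin'_apply] at hcomp
  let g : ℝ → ℝ := fun s => f (γ s) ⬝ᵥ M *ᵥ w + w ⬝ᵥ M *ᵥ f (γ s)
  have hg : ∀ s, HasDerivAt g (J (γ s) *ᵥ w ⬝ᵥ M *ᵥ w + w ⬝ᵥ M *ᵥ (J (γ s) *ᵥ w)) s :=
    fun s =>
      (((hγ s).dotProduct_mulVec M (hasDerivAt_const s w)).fun_add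
        ((hasDerivAt_const s w).dotProduct_mulVec M (hγ s))).congr_deriv (by simp)
  obtain ⟨ξ, -, hξ⟩ := exists_hasDerivAt_eq_slope g _ zero_lt_one
    (fun s _ => (hg s).continuousAt.continuousWithinAt) (fun s _ => hg s)
  have hγ0 : γ 0 = y := by simp [γ]
  have hγ1 : γ 1 = x := by simp [γ, w]
  have hincr : g 1 - g 0 =
      (f x - f y) ⬝ᵥ M *ᵥ w + w ⬝ᵥ M *ᵥ (f x - f y) := by
    simp only [g, hγ0, hγ1, mulVec_sub, dotProduct_sub, sub_dotProduct]
    ring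
  have hbound := (hJ (γ ξ)).mulVec_dotProduct_add_le w
  rwa [hξ, sub_zero, div_one, hincr] at hbound

end

theorem contraction_constant_metric_general {n : ℕ}
    (f : (Fin n → ℝ) → ℝ → (Fin n → ℝ))
    (J : (Fin n → ℝ) → ℝ → Matrix (Fin n) (Fin n) ℝ)
    (hf : ∀ (x : Fin n → ℝ) (t : ℝ),
      HasFDerivAt (fun y => f y t) ((Matrix.toLin' (J x t)).toContinuousLinearMap) x)
    (M : Matrix (Fin n) (Fin n) ℝ)
    (lam : ℝ)
    (hLMI : ∀ (x : Fin n → ℝ) (t : ℝ), 0 ≤ t →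
      ((-(2 * lam)) • M - ((J x t)ᵀ * M + M * J x t)).PosSemidef)
    (x₁ x₂ : ℝ → (Fin n → ℝ))
    (h₁ : ∀ t : ℝ, 0 ≤ t → HasDerivAt x₁ (f (x₁ t) t) t)
    (h₂ : ∀ t : ℝ, 0 ≤ t → HasDerivAt x₂ (f (x₂ t) t) t) :
    ∀ t : ℝ, 0 ≤ t →
      (x₁ t - x₂ t) ⬝ᵥ M.mulVec (x₁ t - x₂ t) ≤
        Real.exp (-(2 * lam) * t) * ((x₁ 0 - x₂ 0) ⬝ᵥ M.mulVec (x₁ 0 - x₂ 0)) := by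
  let e := fun t => x₁ t - x₂ t
  let e' := fun t => f (x₁ t) t - f (x₂ t) t
  have he : ∀ t ∈ Ici (0 : ℝ), HasDerivAt (fun t => e t ⬝ᵥ M *ᵥ e t)
      (e' t ⬝ᵥ M *ᵥ e t + e t ⬝ᵥ M *ᵥ e' t) t := fun t ht =>
    have hdiff := (h₁ t ht).sub (h₂ t ht)
    hdiff.dotProduct_mulVec M hdiff
  have hbound : ∀ t ∈ Ici (0 : ℝ),
      e' t ⬝ᵥ M *ᵥ e t + e t ⬝ᵥ M *ᵥ e' t ≤ -(2 * lam) * (e t ⬝ᵥ M *ᵥ e t) := fun t ht =>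
    dotProduct_mulVec_sub_add_le_of_jacobian (hf · t) (hLMI · t ht) (x₁ t) (x₂ t)
  intro t ht
  have hgronwall := le_mul_exp_of_hasDerivAt_le_mul he hbound t ht
  rwa [sub_zero, mul_comm] at hgronwall

/-- Contraction with respect to a constant metric `M`: if the Jacobian `J(x,t)` of `f`
satisfies `J(x,t)ᵀM + MJ(x,t) ⪯ -2λM` for all `x` and `t ≥ 0`, then any two solutions of
`ẋ = f(x,t)` converge to each other exponentially in the metric `M`. -/
theorem contraction_constant_metric {n : ℕ}
    (f : (Fin n → ℝ) → ℝ → (Fin n → ℝ))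
    (J : (Fin n → ℝ) → ℝ → Matrix (Fin n) (Fin n) ℝ)
    (hf : ∀ (x : Fin n → ℝ) (t : ℝ),
      HasFDerivAt (fun y => f y t) ((Matrix.toLin' (J x t)).toContinuousLinearMap) x)
    (hJ : Continuous fun p : (Fin n → ℝ) × ℝ => J p.1 p.2)
    (M : Matrix (Fin n) (Fin n) ℝ) (hM : M.PosDef)
    (lam : ℝ) (hlam : 0 < lam)
    (hLMI : ∀ (x : Fin n → ℝ) (t : ℝ), 0 ≤ t →
      ((-(2 * lam)) • M - ((J x t)ᵀ * M + M * J x t)).PosSemidef)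
    (x₁ x₂ : ℝ → (Fin n → ℝ))
    (h₁ : ∀ t : ℝ, 0 ≤ t → HasDerivAt x₁ (f (x₁ t) t) t)
    (h₂ : ∀ t : ℝ, 0 ≤ t → HasDerivAt x₂ (f (x₂ t) t) t) :
    ∀ t : ℝ, 0 ≤ t →
      (x₁ t - x₂ t) ⬝ᵥ M.mulVec (x₁ t - x₂ t) ≤
        Real.exp (-(2 * lam) * t) * ((x₁ 0 - x₂ 0) ⬝ᵥ M.mulVec (x₁ 0 - x₂ 0)) :=
  contraction_constant_metric_general f J hf M lam hLMI x₁ x₂ h₁ h₂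
end

section
/- Let W be a symmetric positive definite n×n real matrix, A an n×n real matrix, B an n×m real matrix, λ > 0 and ρ ≥ 0 real numbers. If W·Aᵀ + A·W - ρ·B·Bᵀ ⪯ -2λW, then the feedback gain K = -(ρ/2)·Bᵀ·W⁻¹ satisfies (A + B·K)ᵀ·W⁻¹ + W⁻¹·(A + B·K) ⪯ -2λ·W⁻¹. That is, the pointwise controller LMI certifies that the closed-loop matrix A + BK satisfies the Lyapunov inequality in the metric M = W⁻¹. -/
open Matrix

/-- The pointwise controller LMI `WAᵀ + AW - ρBBᵀ ⪯ -2λW` certifies that the closed-loop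
matrix `A + BK`, with `K = -(ρ/2)BᵀW⁻¹`, satisfies the Lyapunov inequality in the metric
`M = W⁻¹`. -/
theorem controller_lmi_dual {n m : ℕ}
    (W : Matrix (Fin n) (Fin n) ℝ) (hW : W.PosDef)
    (A : Matrix (Fin n) (Fin n) ℝ) (B : Matrix (Fin n) (Fin m) ℝ)
    (lam ρ : ℝ) (hlam : 0 < lam) (hρ : 0 ≤ ρ)
    (hLMI : ((-(2 * lam)) • W - (W * Aᵀ + A * W - ρ • (B * Bᵀ))).PosSemidef)
    (K : Matrix (Fin m) (Fin n) ℝ) (hK : K = (-(ρ / 2)) • (Bᵀ * W⁻¹)) :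
    ((-(2 * lam)) • W⁻¹ - ((A + B * K)ᵀ * W⁻¹ + W⁻¹ * (A + B * K))).PosSemidef := by
  have hWu : IsUnit W.det := isUnit_iff_ne_zero.mpr hW.det_pos.ne'
  have hinv : W⁻¹ * W = 1 := nonsing_inv_mul W hWu
  have hinv' : W * W⁻¹ = 1 := mul_nonsing_inv W hWu
  have hWsym : Wᵀ = W := hW.isHermitian.eq
  have hWisym : W⁻¹ᵀ = W⁻¹ := by
    rw [transpose_nonsing_inv, hWsym]
  have key := hLMI.conjTranspose_mul_mul_same W⁻¹
  have hconj : W⁻¹ᴴ = W⁻¹ := hWisym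
  have heq : W⁻¹ᴴ * ((-(2 * lam)) • W - (W * Aᵀ + A * W - ρ • (B * Bᵀ))) * W⁻¹
      = (-(2 * lam)) • W⁻¹ - ((A + B * K)ᵀ * W⁻¹ + W⁻¹ * (A + B * K)) := by
    rw [hconj, hK]
    simp only [transpose_add, transpose_mul, transpose_smul, hWisym, hWsym,
      transpose_transpose, Matrix.mul_sub, Matrix.sub_mul, Matrix.mul_add,
      Matrix.add_mul, Matrix.mul_smul, Matrix.smul_mul, Matrix.mul_assoc,
      mul_nonsing_inv_cancel_left W _ hWu, nonsing_inv_mul_cancel_left W _ hWu,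
      mul_nonsing_inv_cancel_right _ W hWu, nonsing_inv_mul_cancel_right _ W hWu,
      hinv, hinv', Matrix.mul_one, Matrix.one_mul]
    module
  rw [← heq]
  exact key
end

section
/- (Finsler's lemma.) Let S be a symmetric n×n real matrix and C a p×n real matrix. Then the following are equivalent: (i) for every nonzero x ∈ ℝⁿ with C·x = 0 one has xᵀ·S·x < 0; (ii) there exists a real number ρ ≥ 0 such that S - ρ·Cᵀ·C is negative definite. -/
open Matrix Filter Topology

private lemma quad_continuous {n : ℕ} (S : Matrix (Fin n) (Fin n) ℝ) :
    Continuous fun x : Fin n → ℝ => x ⬝ᵥ S.mulVec x := by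
  unfold dotProduct Matrix.mulVec
  exact continuous_finset_sum _ fun i _ => (continuous_apply i).mul
    (continuous_finset_sum _ fun j _ => continuous_const.mul (continuous_apply j))

private lemma quad_smul {n : ℕ} (M : Matrix (Fin n) (Fin n) ℝ) (c : ℝ) (x : Fin n → ℝ) :
    (c • x) ⬝ᵥ M.mulVec (c • x) = c ^ 2 * (x ⬝ᵥ M.mulVec x) := by
  rw [Matrix.mulVec_smul, smul_dotProduct, dotProduct_smul,
    smul_eq_mul, smul_eq_mul]; ring

private lemma ctc_quad {n p : ℕ} (C : Matrix (Fin p) (Fin n) ℝ) (x : Fin n → ℝ) :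
    x ⬝ᵥ (Cᵀ * C).mulVec x = (C.mulVec x) ⬝ᵥ (C.mulVec x) := by
  rw [← Matrix.mulVec_mulVec, Matrix.dotProduct_mulVec, Matrix.vecMul_transpose]

private lemma dp_self_nonneg {n : ℕ} (x : Fin n → ℝ) : 0 ≤ x ⬝ᵥ x :=
  Finset.sum_nonneg fun i _ => mul_self_nonneg _

/-- Finsler's lemma: for a symmetric matrix `S` and a matrix `C`, the quadratic form of `S`
is negative on the nonzero kernel of `C` if and only if `S - ρCᵀC` is negative definite for
some `ρ ≥ 0`. -/
theorem finsler_lemma {n p : ℕ}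
    (S : Matrix (Fin n) (Fin n) ℝ) (hS : S.IsSymm)
    (C : Matrix (Fin p) (Fin n) ℝ) :
    (∀ x : Fin n → ℝ, x ≠ 0 → C.mulVec x = 0 → x ⬝ᵥ S.mulVec x < 0) ↔
      (∃ ρ : ℝ, 0 ≤ ρ ∧
        ∀ x : Fin n → ℝ, x ≠ 0 → x ⬝ᵥ (S - ρ • (Cᵀ * C)).mulVec x < 0) := by
  set f : (Fin n → ℝ) → ℝ := fun x => x ⬝ᵥ S.mulVec x with hf
  set g : (Fin n → ℝ) → ℝ := fun x => x ⬝ᵥ (Cᵀ * C).mulVec x with hg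
  have hgnn : ∀ x, 0 ≤ g x := fun x => by
    rw [hg]; simp only; rw [ctc_quad]; exact dp_self_nonneg _
  have hquad : ∀ (ρ : ℝ) (x : Fin n → ℝ),
      x ⬝ᵥ (S - ρ • (Cᵀ * C)).mulVec x = f x - ρ * g x := by
    intro ρ x
    rw [Matrix.sub_mulVec, dotProduct_sub, Matrix.smul_mulVec,
      dotProduct_smul, smul_eq_mul]
  constructor
  · intro h
    by_contra hcon
    push_neg at hcon
    -- for each k : ℕ, get a unit vector u k with k * g (u k) ≤ f (u k)
    have key : ∀ k : ℕ, ∃ u : Fin n → ℝ, ‖u‖ = 1 ∧ (k : ℝ) * g u ≤ f u := by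
      intro k
      obtain ⟨x, hx0, hxq⟩ := hcon (k : ℝ) (Nat.cast_nonneg k)
      rw [hquad] at hxq
      have hxn : ‖x‖ ≠ 0 := norm_ne_zero_iff.mpr hx0
      refine ⟨‖x‖⁻¹ • x, ?_, ?_⟩
      · rw [norm_smul, norm_inv, norm_norm, inv_mul_cancel₀ hxn]
      · have hf' : f (‖x‖⁻¹ • x) = (‖x‖⁻¹) ^ 2 * f x := quad_smul S _ x
        have hg' : g (‖x‖⁻¹ • x) = (‖x‖⁻¹) ^ 2 * g x := quad_smul _ _ x
        rw [hf', hg']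
        have hc : (0:ℝ) ≤ (‖x‖⁻¹) ^ 2 := sq_nonneg _
        nlinarith [hxq]
    choose u hu1 hu2 using key
    -- bound for f on the unit sphere
    set M : ℝ := ∑ i : Fin n, ∑ j : Fin n, |S i j| with hM
    have hfb : ∀ k, f (u k) ≤ M := by
      intro k
      have hle : ∀ i, |u k i| ≤ 1 := by
        intro i
        calc |u k i| = ‖u k i‖ := rfl
        _ ≤ ‖u k‖ := norm_le_pi_norm (u k) i
        _ = 1 := hu1 k
      calc f (u k) ≤ |f (u k)| := le_abs_self _
      _ ≤ ∑ i : Fin n, |u k i * ∑ j : Fin n, S i j * u k j| := Finset.abs_sum_le_sum_abs _ _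
      _ ≤ M := by
          rw [hM]
          apply Finset.sum_le_sum
          intro i _
          rw [abs_mul]
          calc |u k i| * |∑ j : Fin n, S i j * u k j|
              ≤ 1 * |∑ j : Fin n, S i j * u k j| := by
                apply mul_le_mul_of_nonneg_right (hle i) (abs_nonneg _)
          _ = |∑ j : Fin n, S i j * u k j| := one_mul _
          _ ≤ ∑ j : Fin n, |S i j * u k j| := Finset.abs_sum_le_sum_abs _ _
          _ ≤ ∑ j : Fin n, |S i j| := by
              apply Finset.sum_le_sum
              intro j _
              rw [abs_mul]
              calc |S i j| * |u k j| ≤ |S i j| * 1 :=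
                mul_le_mul_of_nonneg_left (hle j) (abs_nonneg _)
              _ = |S i j| := mul_one _
    have hM0 : 0 ≤ M := Finset.sum_nonneg fun i _ => Finset.sum_nonneg fun j _ => abs_nonneg _
    -- extract a convergent subsequence
    have husphere : ∀ k, u k ∈ Metric.sphere (0 : Fin n → ℝ) 1 := by
      intro k; simpa [Metric.mem_sphere, dist_eq_norm] using hu1 k
    obtain ⟨L, hLs, φ, hφ, hφt⟩ :=
      (isCompact_sphere (0 : Fin n → ℝ) 1).tendsto_subseq husphere
    have hL1 : ‖L‖ = 1 := by simpa [Metric.mem_sphere, dist_eq_norm] using hLs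
    have hL0 : L ≠ 0 := by intro h0; rw [h0, norm_zero] at hL1; norm_num at hL1
    have hgt : Tendsto (fun k => g (u (φ k))) atTop (𝓝 (g L)) :=
      ((quad_continuous _).tendsto L).comp hφt
    have hft : Tendsto (fun k => f (u (φ k))) atTop (𝓝 (f L)) :=
      ((quad_continuous _).tendsto L).comp hφt
    -- g (u (φ k)) ≤ M / k for k ≥ 1
    have hgb : ∀ k : ℕ, 1 ≤ k → g (u (φ k)) ≤ M / k := by
      intro k hk
      have hk' : (0:ℝ) < k := by exact_mod_cast hk
      rw [le_div_iff₀ hk']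
      have h1 : (k : ℝ) ≤ (φ k : ℝ) := by exact_mod_cast hφ.le_apply
      have h2 : (k : ℝ) * g (u (φ k)) ≤ (φ k : ℝ) * g (u (φ k)) :=
        mul_le_mul_of_nonneg_right h1 (hgnn _)
      calc g (u (φ k)) * k = (k:ℝ) * g (u (φ k)) := mul_comm _ _
      _ ≤ (φ k : ℝ) * g (u (φ k)) := h2
      _ ≤ f (u (φ k)) := hu2 (φ k)
      _ ≤ M := hfb _
    -- g L = 0
    have hgL : g L = 0 := by
      have hzero : Tendsto (fun k : ℕ => M / k) atTop (𝓝 0) :=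
        tendsto_const_div_atTop_nhds_zero_nat M
      have hsq : Tendsto (fun k => g (u (φ k))) atTop (𝓝 0) := by
        apply tendsto_of_tendsto_of_tendsto_of_le_of_le' tendsto_const_nhds hzero
        · exact Eventually.of_forall fun k => hgnn _
        · exact eventually_atTop.mpr ⟨1, fun k hk => hgb k hk⟩
      exact tendsto_nhds_unique hgt hsq
    -- so C.mulVec L = 0 and f L < 0
    have hCL : C.mulVec L = 0 := by
      have := hgL
      rw [hg] at this; simp only at this; rw [ctc_quad] at this
      exact dotProduct_self_eq_zero.mp this
    have hfL : f L < 0 := h L hL0 hCL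
    -- but f L ≥ 0
    have hfL0 : 0 ≤ f L := by
      apply le_of_tendsto_of_tendsto' tendsto_const_nhds hft
      intro k
      calc (0:ℝ) ≤ (φ k : ℝ) * g (u (φ k)) :=
        mul_nonneg (Nat.cast_nonneg _) (hgnn _)
      _ ≤ f (u (φ k)) := hu2 _
    linarith
  · rintro ⟨ρ, hρ, hneg⟩ x hx0 hCx
    have := hneg x hx0
    rw [hquad] at this
    have hgx : g x = 0 := by
      rw [hg]; simp only; rw [ctc_quad, hCx]; simp
    rw [hgx, mul_zero, sub_zero] at this
    exact this
end

section
/- (Universal detectability from the observer metric condition.) Let f : ℝⁿ → ℝⁿ be continuously differentiable with Jacobian A(x), B an n×m real matrix, C a p×n real matrix, W symmetric positive definite, λ > 0, and ρ : ℝⁿ → ℝ continuous with ρ(x) ≥ 0 for all x. Suppose A(x)ᵀ·W + W·A(x) - ρ(x)·Cᵀ·C ⪯ -2λW for all x ∈ ℝⁿ. Then for any continuous u : [0,∞) → ℝᵐ, any two solutions x₁, x₂ of ẋ = f(x) + B·u(t) whose outputs coincide, C·x₁(t) = C·x₂(t) for all t ≥ 0, satisfy (x₁(t)-x₂(t))ᵀ·W·(x₁(t)-x₂(t))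 ≤ e^{-2λt}·(x₁(0)-x₂(0))ᵀ·W·(x₁(0)-x₂(0)); i.e. indistinguishable trajectories converge exponentially, so the system is universally detectable. -/
/-!
Along the difference `e = x₁ - x₂` of two trajectories with equal outputs we have `C e = 0`, so
the term `ρ(x) CᵀC` of the metric condition is invisible and it yields
`(A(x) e)ᵀ W e + eᵀ W A(x) e ≤ -2λ eᵀ W e` for every `x`. By the mean value theorem along the segment from
`x₂` to `x₁` the same bound holds with `A(x) e` replaced by `f(x₁) - f(x₂) = ė`, i.e.
`d/dt (eᵀ W e) ≤ -2λ eᵀ W e`, and Grönwall's inequality gives the exponential decay.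
-/

open Matrix

section Calculus

variable {𝕜 : Type*} [NontriviallyNormedField 𝕜] {ι : Type*} [Fintype ι]

theorem HasDerivAt.dotProduct_s12 {a b : 𝕜 → ι → 𝕜} {a' b' : ι → 𝕜} {t : 𝕜}
    (ha : HasDerivAt a a' t) (hb : HasDerivAt b b' t) :
    HasDerivAt (fun s => a s ⬝ᵥ b s) (a' ⬝ᵥ b t + a t ⬝ᵥ b') t := by
  have hab i : HasDerivAt (fun s => a s i * b s i) (a' i * b t i + a t i * b' i) t :=
    (hasDerivAt_pi.1 ha i).mul (hasDerivAt_pi.1 hb i)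
  exact (HasDerivAt.fun_sum fun i _ => hab i).congr_deriv Finset.sum_add_distrib

theorem HasDerivAt.const_mulVec {κ : Type*} (M : Matrix κ ι 𝕜) {e : 𝕜 → ι → 𝕜} {e' : ι → 𝕜}
    {t : 𝕜} (he : HasDerivAt e e' t) : HasDerivAt (fun s => M *ᵥ e s) (M *ᵥ e') t :=
  hasDerivAt_pi.2 fun i =>
    ((hasDerivAt_const t (M i)).dotProduct_s12 he).congr_deriv (by rw [zero_dotProduct, zero_add]; rfl)

end Calculus

theorem le_exp_mul_mul_of_hasDerivAt_le_mul {V V' : ℝ → ℝ} {K : ℝ}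
    (hV : ∀ t, 0 ≤ t → HasDerivAt V (V' t) t) (hV' : ∀ t, 0 ≤ t → V' t ≤ K * V t)
    {t : ℝ} (ht : 0 ≤ t) : V t ≤ Real.exp (K * t) * V 0 := by
  have := le_gronwallBound_of_liminf_deriv_right_le (f := V) (f' := V') (δ := V 0) (K := K)
    (ε := 0) (a := 0) (b := t)
    (fun s hs => (hV s hs.1).continuousAt.continuousWithinAt)
    (fun s hs _ hr => (hV s hs.1).hasDerivWithinAt.liminf_right_slope_le hr) le_rfl
    (fun s hs => by simpa using hV' s hs.1) t ⟨ht, le_rfl⟩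
  rwa [gronwallBound_ε0, sub_zero, mul_comm] at this

theorem HasFDerivAt.image_sub_le_of_apply_le {E F : Type*} [NormedAddCommGroup E]
    [NormedSpace ℝ E] [NormedAddCommGroup F] [NormedSpace ℝ F] {f : E → F} {f' : E → E →L[ℝ] F}
    (hf : ∀ x, HasFDerivAt f (f' x) x) (L : F →L[ℝ] ℝ) {c : ℝ} (y e : E)
    (hc : ∀ x, L (f' x e) ≤ c) : L (f (y + e) - f y) ≤ c := by
  have hg s : HasDerivAt (fun s : ℝ => L (f (y + s • e))) (L (f' (y + s • e) e)) s := by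
    have hline : HasDerivAt (fun s : ℝ => y + s • e) e s := by
      simpa using ((hasDerivAt_id s).smul_const e).const_add y
    exact L.hasFDerivAt.comp_hasDerivAt s ((hf _).comp_hasDerivAt s hline)
  have := image_sub_le_mul_sub_of_deriv_le (fun s => (hg s).differentiableAt)
    (fun s => (hg s).deriv ▸ hc _) zero_le_one
  simpa using this

theorem add_dotProduct_mulVec_le_of_posSemidef {ι κ : Type*} [Fintype ι] [Fintype κ]
    {W M : Matrix ι ι ℝ} {C : Matrix κ ι ℝ} {μ r : ℝ}
    (h : (μ • W - (Mᵀ * W + W * M - r • (Cᵀ * C))).PosSemidef) {e : ι → ℝ} (he : C *ᵥ e = 0) :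
    (M *ᵥ e) ⬝ᵥ W *ᵥ e + e ⬝ᵥ W *ᵥ (M *ᵥ e) ≤ μ * (e ⬝ᵥ W *ᵥ e) := by
  have h0 := h.dotProduct_mulVec_nonneg e
  simp only [star_trivial, sub_mulVec, add_mulVec, smul_mulVec, ← mulVec_mulVec, he, mulVec_zero,
    smul_zero, sub_zero, dotProduct_sub, dotProduct_add, dotProduct_smul, smul_eq_mul] at h0
  rw [dotProduct_mulVec e Mᵀ, vecMul_transpose] at h0
  linarith

theorem add_dotProduct_mulVec_image_sub_le {ι κ : Type*} [Fintype ι] [DecidableEq ι] [Fintype κ]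
    {f : (ι → ℝ) → ι → ℝ} {A : (ι → ℝ) → Matrix ι ι ℝ}
    (hf : ∀ x, HasFDerivAt f (Matrix.toLin' (A x)).toContinuousLinearMap x)
    {W : Matrix ι ι ℝ} {C : Matrix κ ι ℝ} {μ : ℝ} {r : (ι → ℝ) → ℝ}
    (hLMI : ∀ x, (μ • W - ((A x)ᵀ * W + W * A x - r x • (Cᵀ * C))).PosSemidef)
    (y : ι → ℝ) {e : ι → ℝ} (he : C *ᵥ e = 0) :
    (f (y + e) - f y) ⬝ᵥ W *ᵥ e + e ⬝ᵥ W *ᵥ (f (y + e) - f y) ≤ μ * (e ⬝ᵥ W *ᵥ e) := by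
  let L : (ι → ℝ) →L[ℝ] ℝ :=
    LinearMap.toContinuousLinearMap ((toLinearMap₂' ℝ W).flip e + toLinearMap₂' ℝ W e)
  have hL v : L v = v ⬝ᵥ W *ᵥ e + e ⬝ᵥ W *ᵥ v := by
    simp [L, toLinearMap₂'_apply']
  simpa only [hL] using HasFDerivAt.image_sub_le_of_apply_le hf L y e fun x => by
    simpa only [hL, LinearMap.coe_toContinuousLinearMap', toLin'_apply] using
      add_dotProduct_mulVec_le_of_posSemidef (hLMI x) he

theorem universal_detectability_general {n m p : ℕ}
    (f : (Fin n → ℝ) → (Fin n → ℝ))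
    (A : (Fin n → ℝ) → Matrix (Fin n) (Fin n) ℝ)
    (hf : ∀ x : Fin n → ℝ,
      HasFDerivAt f ((Matrix.toLin' (A x)).toContinuousLinearMap) x)
    (B : Matrix (Fin n) (Fin m) ℝ) (C : Matrix (Fin p) (Fin n) ℝ)
    (W : Matrix (Fin n) (Fin n) ℝ)
    (lam : ℝ)
    (ρ : (Fin n → ℝ) → ℝ)
    (hLMI : ∀ x : Fin n → ℝ,
      ((-(2 * lam)) • W - ((A x)ᵀ * W + W * A x - ρ x • (Cᵀ * C))).PosSemidef)
    (u : ℝ → (Fin m → ℝ))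
    (x₁ x₂ : ℝ → (Fin n → ℝ))
    (h₁ : ∀ t : ℝ, 0 ≤ t → HasDerivAt x₁ (f (x₁ t) + B.mulVec (u t)) t)
    (h₂ : ∀ t : ℝ, 0 ≤ t → HasDerivAt x₂ (f (x₂ t) + B.mulVec (u t)) t)
    (hout : ∀ t : ℝ, 0 ≤ t → C.mulVec (x₁ t) = C.mulVec (x₂ t)) :
    ∀ t : ℝ, 0 ≤ t →
      (x₁ t - x₂ t) ⬝ᵥ W.mulVec (x₁ t - x₂ t) ≤
        Real.exp (-(2 * lam) * t) * ((x₁ 0 - x₂ 0) ⬝ᵥ W.mulVec (x₁ 0 - x₂ 0)) := by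
  intro t ht
  let e τ := x₁ τ - x₂ τ
  have hcontract τ (hτ : 0 ≤ τ) :
      (f (x₁ τ) - f (x₂ τ)) ⬝ᵥ W *ᵥ e τ + e τ ⬝ᵥ W *ᵥ (f (x₁ τ) - f (x₂ τ)) ≤
        -(2 * lam) * (e τ ⬝ᵥ W *ᵥ e τ) := by
    have hCe : C *ᵥ e τ = 0 := by rw [mulVec_sub, hout τ hτ, sub_self]
    simpa [e] using add_dotProduct_mulVec_image_sub_le hf hLMI (x₂ τ) hCe
  refine le_exp_mul_mul_of_hasDerivAt_le_mul (fun τ hτ => ?_) hcontract ht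
  have he : HasDerivAt e (f (x₁ τ) - f (x₂ τ)) τ :=
    ((h₁ τ hτ).sub (h₂ τ hτ)).congr_deriv (add_sub_add_right_eq_sub _ _ _)
  exact he.dotProduct_s12 (he.const_mulVec W)

/-- Universal detectability from the observer metric condition: if
`A(x)ᵀW + WA(x) - ρ(x)CᵀC ⪯ -2λW` for all `x`, then any two trajectories with identical
outputs converge to each other exponentially in the metric `W`. -/
theorem universal_detectability {n m p : ℕ}
    (f : (Fin n → ℝ) → (Fin n → ℝ))
    (A : (Fin n → ℝ) → Matrix (Fin n) (Fin n) ℝ)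
    (hf : ∀ x : Fin n → ℝ,
      HasFDerivAt f ((Matrix.toLin' (A x)).toContinuousLinearMap) x)
    (hA : Continuous A)
    (B : Matrix (Fin n) (Fin m) ℝ) (C : Matrix (Fin p) (Fin n) ℝ)
    (W : Matrix (Fin n) (Fin n) ℝ) (hW : W.PosDef)
    (lam : ℝ) (hlam : 0 < lam)
    (ρ : (Fin n → ℝ) → ℝ) (hρcont : Continuous ρ) (hρ : ∀ x, 0 ≤ ρ x)
    (hLMI : ∀ x : Fin n → ℝ,
      ((-(2 * lam)) • W - ((A x)ᵀ * W + W * A x - ρ x • (Cᵀ * C))).PosSemidef)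
    (u : ℝ → (Fin m → ℝ)) (hu : Continuous u)
    (x₁ x₂ : ℝ → (Fin n → ℝ))
    (h₁ : ∀ t : ℝ, 0 ≤ t → HasDerivAt x₁ (f (x₁ t) + B.mulVec (u t)) t)
    (h₂ : ∀ t : ℝ, 0 ≤ t → HasDerivAt x₂ (f (x₂ t) + B.mulVec (u t)) t)
    (hout : ∀ t : ℝ, 0 ≤ t → C.mulVec (x₁ t) = C.mulVec (x₂ t)) :
    ∀ t : ℝ, 0 ≤ t →
      (x₁ t - x₂ t) ⬝ᵥ W.mulVec (x₁ t - x₂ t) ≤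
        Real.exp (-(2 * lam) * t) * ((x₁ 0 - x₂ 0) ⬝ᵥ W.mulVec (x₁ 0 - x₂ 0)) :=
  universal_detectability_general f A hf B C W lam ρ hLMI u x₁ x₂ h₁ h₂ hout
end

section
/- (Controller certificate for the Moore–Greitzer jet engine model.) Let A(x) = [[-3φ - (3/2)φ², -1], [1, 0]] for x = (φ, ψ) ∈ ℝ² and B = (0, 1)ᵀ. There exist a symmetric positive definite 2×2 real matrix W with 0.1·I ⪯ W ⪯ 1.3·I and a polynomial function ρ : ℝ² → ℝ with ρ(x) ≥ 0 for all x, such that for all x ∈ ℝ²: W·A(x)ᵀ + A(x)·W - ρ(x)·B·Bᵀ ⪯ -0.2·W. (This is the pointwise controller LMI with contraction rate λ = 0.1 for the Moore–Greitzer surge dynamics φ̇ = -ψ - (3/2)φ² - (1/2)φ³, ψ̇ = φ + u, whose Jacobian is A(x).) -/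
/-!
The metric is the constant matrix `W = !![0.2, 0.33; 0.33, 1.2]`. Writing `φ = x 0`, the
LMI matrix `-0.2 W - (W Aᵀ + A W - r B Bᵀ)` works out to
`!![0.6 (φ + 1)² + 0.02, q; q, r - 0.9]` with `q = 0.934 + 0.99 φ + 0.495 φ²`. The multiplier
`ρ = 0.9 + 50 q²` turns the lower corner into `50 q²`, and since the upper corner is at least
`1/50`, the determinant `q² (50 · upper corner - 1)` is nonnegative.
-/

open Matrix

/-- The Jacobian of the Moore–Greitzer surge dynamics. -/
noncomputable def mooreGreitzerA (x : Fin 2 → ℝ) : Matrix (Fin 2) (Fin 2) ℝ :=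
  !![-3 * x 0 - (3 / 2) * (x 0) ^ 2, -1; 1, 0]

/-- The input matrix of the Moore–Greitzer surge dynamics. -/
noncomputable def mooreGreitzerB : Matrix (Fin 2) (Fin 1) ℝ := !![0; 1]

namespace Matrix

theorem PosDef.of_posSemidef_sub_smul_one {R n : Type*} [CommRing R] [LinearOrder R]
    [IsStrictOrderedRing R] [StarRing R] [StarOrderedRing R] [Fintype n] [DecidableEq n]
    {W : Matrix n n R} {c : R} (hc : 0 < c) (hW : (W - c • 1).PosSemidef) : W.PosDef := by
  simpa using PosDef.posSemidef_add hW (PosDef.one.smul hc)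

theorem posSemidef_fin_two_of_sq_le {R : Type*} [CommRing R] [LinearOrder R]
    [IsStrictOrderedRing R] [StarRing R] [TrivialStar R] {a b c : R}
    (ha : 0 ≤ a) (hc : 0 ≤ c) (hb : b ^ 2 ≤ a * c) : !![a, b; b, c].PosSemidef := by
  refine posSemidef_iff_dotProduct_mulVec.mpr ⟨?_, fun v => ?_⟩
  · ext i j
    fin_cases i <;> fin_cases j <;> simp
  · simp only [dotProduct, mulVec, Fin.sum_univ_two, star_trivial, of_apply, cons_val',
      cons_val_zero, cons_val_one, empty_val', cons_val_fin_one]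
    rcases ha.eq_or_lt with rfl | ha
    · obtain rfl : b = 0 := by nlinarith
      nlinarith [mul_nonneg hc (sq_nonneg (v 1))]
    · -- completing the square: `a · Q(v) = (a v₀ + b v₁)² + (a c - b²) v₁²`
      have hQ : 0 ≤ a * (v 0 * (a * v 0 + b * v 1) + v 1 * (b * v 0 + c * v 1)) := by
        nlinarith [sq_nonneg (a * v 0 + b * v 1), mul_nonneg (sub_nonneg.2 hb) (sq_nonneg (v 1))]
      exact nonneg_of_mul_nonneg_right (by linarith) ha

end Matrix

open MvPolynomial

noncomputable def mooreGreitzerW : Matrix (Fin 2) (Fin 2) ℝ := !![0.2, 0.33; 0.33, 1.2]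

noncomputable def mooreGreitzerCross : MvPolynomial (Fin 2) ℝ :=
  C 0.934 + C 0.99 * X 0 + C 0.495 * X 0 ^ 2

noncomputable def mooreGreitzerMultiplier : MvPolynomial (Fin 2) ℝ :=
  C 0.9 + C 50 * mooreGreitzerCross ^ 2

theorem eval_mooreGreitzerMultiplier (x : Fin 2 → ℝ) :
    eval x mooreGreitzerMultiplier = 0.9 + 50 * eval x mooreGreitzerCross ^ 2 := by
  simp [mooreGreitzerMultiplier]

theorem posSemidef_mooreGreitzerW_sub_smul_one :
    (mooreGreitzerW - (0.1 : ℝ) • 1).PosSemidef := by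
  have hW : mooreGreitzerW - (0.1 : ℝ) • 1 = !![0.1, 0.33; 0.33, 1.1] := by
    rw [mooreGreitzerW, one_fin_two]
    ext i j
    fin_cases i <;> fin_cases j <;> norm_num
  rw [hW]
  exact posSemidef_fin_two_of_sq_le (by norm_num) (by norm_num) (by norm_num)

theorem posSemidef_smul_one_sub_mooreGreitzerW :
    ((1.3 : ℝ) • 1 - mooreGreitzerW).PosSemidef := by
  have hW : (1.3 : ℝ) • 1 - mooreGreitzerW = !![1.1, -0.33; -0.33, 0.1] := by
    rw [mooreGreitzerW, one_fin_two]
    ext i j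
    fin_cases i <;> fin_cases j <;> norm_num
  rw [hW]
  exact posSemidef_fin_two_of_sq_le (by norm_num) (by norm_num) (by norm_num)

theorem mooreGreitzer_lmi_eq (x : Fin 2 → ℝ) (r : ℝ) :
    (-(0.2 : ℝ)) • mooreGreitzerW -
        (mooreGreitzerW * (mooreGreitzerA x)ᵀ + mooreGreitzerA x * mooreGreitzerW -
          r • (mooreGreitzerB * mooreGreitzerBᵀ)) =
      !![0.6 * (x 0 + 1) ^ 2 + 0.02, eval x mooreGreitzerCross;
        eval x mooreGreitzerCross, r - 0.9] := by
  ext i j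
  fin_cases i <;> fin_cases j <;>
    simp [mooreGreitzerW, mooreGreitzerA, mooreGreitzerB, mooreGreitzerCross, vecMul,
      dotProduct, Fin.sum_univ_two, vecHead, vecTail] <;> ring

/-- Controller certificate for the Moore–Greitzer jet engine model: there exist a
constant metric `W` with `0.1·I ⪯ W ⪯ 1.3·I` and a nonnegative polynomial multiplier `ρ`
satisfying the pointwise controller LMI with contraction rate `λ = 0.1`. -/
theorem mooreGreitzer_controller_certificate :
    ∃ (W : Matrix (Fin 2) (Fin 2) ℝ) (ρ : MvPolynomial (Fin 2) ℝ),
      W.PosDef ∧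
      (W - (0.1 : ℝ) • (1 : Matrix (Fin 2) (Fin 2) ℝ)).PosSemidef ∧
      ((1.3 : ℝ) • (1 : Matrix (Fin 2) (Fin 2) ℝ) - W).PosSemidef ∧
      (∀ x : Fin 2 → ℝ, 0 ≤ MvPolynomial.eval x ρ) ∧
      (∀ x : Fin 2 → ℝ,
        ((-(0.2 : ℝ)) • W -
          (W * (mooreGreitzerA x)ᵀ + mooreGreitzerA x * W -
            MvPolynomial.eval x ρ • (mooreGreitzerB * mooreGreitzerBᵀ))).PosSemidef) := by
  refine ⟨mooreGreitzerW, mooreGreitzerMultiplier,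
    .of_posSemidef_sub_smul_one (by norm_num) posSemidef_mooreGreitzerW_sub_smul_one,
    posSemidef_mooreGreitzerW_sub_smul_one, posSemidef_smul_one_sub_mooreGreitzerW,
    fun x => ?_, fun x => ?_⟩
  · rw [eval_mooreGreitzerMultiplier]
    positivity
  · rw [mooreGreitzer_lmi_eq, eval_mooreGreitzerMultiplier, add_sub_cancel_left]
    set q := eval x mooreGreitzerCross
    exact posSemidef_fin_two_of_sq_le (by positivity) (by positivity)
      (by nlinarith [sq_nonneg ((x 0 + 1) * q)])
end
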